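/- arXiv:1412.4079 — 2 statements merged into one kernel-verified Lean document; each statement's English description precedes it below -/
import Mathlib

section
/- Let A, B : ℝ² → ℝ be real-valued Schwartz functions with Fourier transforms Â and B̂, and let l ∈ ℝ². Then the integral ∫_{ℝ²} i·(Â(k−l) − Â(k+l))·conj(B̂(k)) dk is a real number, i.e., its imaginary part is zero. -/
open MeasureTheory
open scoped RealInnerProductSpace

noncomputable section

/-- `ℝ²` as a Euclidean (inner product) space. -/
abbrev E2 := EuclideanSpace ℝ (Fin 2)

/-- The Fourier transform with the paper's normalization:
`f̂(l) = (2π)⁻¹ ∫ e^{-i x·l} f(x) dx`. -/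
noncomputable def ft (f : E2 → ℂ) (l : E2) : ℂ :=
  (2 * Real.pi)⁻¹ • ∫ x : E2, Complex.exp (-(Complex.I * (⟪x, l⟫ : ℂ))) * f x

/-- Fourier transform of a real-valued function. -/
noncomputable def ftR (f : E2 → ℝ) (l : E2) : ℂ := ft (fun x => (f x : ℂ)) l

lemma ftR_neg (f : E2 → ℝ) (x : E2) : ftR f (-x) = (starRingEnd ℂ) (ftR f x) := by
  unfold ftR ft
  rw [Complex.real_smul, Complex.real_smul, map_mul, Complex.conj_ofReal, ← integral_conj]
  have h : (fun y : E2 => Complex.exp (-(Complex.I * (⟪y, -x⟫ : ℂ))) * (f y : ℂ))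
      = fun y : E2 => (starRingEnd ℂ) (Complex.exp (-(Complex.I * (⟪y, x⟫ : ℂ))) * (f y : ℂ)) := by
    funext y
    rw [map_mul, ← Complex.exp_conj, Complex.conj_ofReal]
    congr 2
    rw [map_neg, map_mul, Complex.conj_I, Complex.conj_ofReal]
    push_cast [inner_neg_right]
    ring
  rw [h]


/-- Lemma "forreal", first part: for real-valued Schwartz `A`, `B` and any `l ∈ ℝ²`,
the integral `∫ i (Â(k-l) - Â(k+l)) conj(B̂(k)) dk` is real. -/
theorem stmt0 (A B : SchwartzMap E2 ℝ) (l : E2) :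
    (∫ k : E2, Complex.I * (ftR A (k - l) - ftR A (k + l)) *
      (starRingEnd ℂ) (ftR B k)).im = 0 := by
  set g : E2 → ℂ := fun k => Complex.I * (ftR A (k - l) - ftR A (k + l)) *
      (starRingEnd ℂ) (ftR B k) with hg
  have key : ∀ k : E2, (starRingEnd ℂ) (g (-k)) = g k := by
    intro k
    simp only [hg]
    rw [map_mul, map_mul, map_sub, Complex.conj_I]
    rw [show -k - l = -(k + l) by abel, show -k + l = -(k - l) by abel]
    rw [ftR_neg, ftR_neg, ftR_neg]
    simp only [RingHomCompTriple.comp_apply, RingHom.id_apply, Complex.conj_conj]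
    ring
  have h1 : (∫ k : E2, g k) = (starRingEnd ℂ) (∫ k : E2, g k) := by
    conv_lhs => rw [← MeasureTheory.integral_neg_eq_self g]
    calc (∫ k : E2, g (-k)) = ∫ k : E2, (starRingEnd ℂ) (g k) := by
          refine integral_congr_ae (Filter.Eventually.of_forall fun k => ?_)
          show g (-k) = (starRingEnd ℂ) (g k)
          rw [← key k]
          simp
      _ = (starRingEnd ℂ) (∫ k : E2, g k) := integral_conj
  have := congrArg Complex.im h1
  simp [Complex.conj_im] at this
  linarith
end
end

section
/- Let T̃ : ℝ² → ℝ be continuously differentiable with compact support, let φ : ℝ² → ℝ be twice continuously differentiable with bounded gradient ∇φ, and fix k, l ∈ ℝ². Let ψ_l(x) = 2 cos(l·x), and define A^q(x) = (∂T̃/∂x_q)(x − ∇φ(x)) for q = 1, 2. Then the derivative at ε = 0 of ε ↦ (2π)⁻¹ ∫_{ℝ²} e^{−i k·x} T̃(x − ∇φ(x) − ε ∇ψ_l(x)) dx equals Σ_{q=1,2} i l_q ( Â^q(k+l) − Â^q(k−l) ), where Â^q denotes the Fourier transform of A^q and l_q denotes the q-th component of l. -/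
/-!
Differentiate under the integral sign: for `|ε| < 1` the integrand vanishes outside a fixed ball
(the displacement `∇φ + ε ∇ψ_l` is bounded and `T` has compact support), and there its
`ε`-derivative `e^{-ik·x} DT(x - ∇φ(x) - ε∇ψ_l(x))(-∇ψ_l(x))` is uniformly bounded.
At `ε = 0` we have `-∇ψ_l(x) = 2 sin(l·x) l`, and
`e^{-ik·x} · 2 sin(l·x) = i (e^{-i(k+l)·x} - e^{-i(k-l)·x})`,
which splits the derivative into the Fourier coefficients of the `A^q` at `k ± l`.
-/

open MeasureTheory
open scoped RealInnerProductSpace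

noncomputable section

/-- The `q`-th partial derivative of `f : ℝ² → ℝ`. -/
noncomputable def pderiv2 (q : Fin 2) (f : E2 → ℝ) (x : E2) : ℝ :=
  fderiv ℝ f x (EuclideanSpace.single q 1)

/-- The anti-lensed gradient field `A^q(x) = (∂T/∂x_q)(x - ∇φ(x))`. -/
noncomputable def Aq (T φ : E2 → ℝ) (q : Fin 2) (x : E2) : ℝ :=
  pderiv2 q T (x - gradient φ x)

/-- The cosine mode `ψ_l(x) = 2 cos(l·x)`. -/
noncomputable def psil (l : E2) (x : E2) : ℝ := 2 * Real.cos ⟪l, x⟫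

open Metric Complex

section CompactSupport

variable {E F : Type*} [SeminormedAddCommGroup E] [Zero F]

lemma apply_sub_eq_zero_of_tsupport_subset_closedBall {g : E → F} {R M : ℝ}
    (hR : tsupport g ⊆ closedBall 0 R) {x v : E} (hv : ‖v‖ ≤ M)
    (hx : x ∉ closedBall 0 (R + M)) : g (x - v) = 0 := by
  refine image_eq_zero_of_notMem_tsupport fun h => hx ?_
  have hxv : ‖x - v‖ ≤ R := by simpa using hR h
  rw [mem_closedBall_zero_iff]
  calc ‖x‖ = ‖(x - v) + v‖ := by rw [sub_add_cancel]
    _ ≤ R + M := (norm_add_le _ _).trans (add_le_add hxv hv)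

lemma HasCompactSupport.comp_sub_of_norm_le [ProperSpace E] {g : E → F}
    (hg : HasCompactSupport g) {v : E → E} {M : ℝ} (hv : ∀ x, ‖v x‖ ≤ M) :
    HasCompactSupport fun x => g (x - v x) := by
  obtain ⟨R, hR⟩ := hg.isBounded.subset_closedBall 0
  exact HasCompactSupport.intro (isCompact_closedBall 0 (R + M)) fun x hx =>
    apply_sub_eq_zero_of_tsupport_subset_closedBall hR (hv x) hx

end CompactSupport

lemma ContDiff.continuous_gradient {F : Type*} [NormedAddCommGroup F] [InnerProductSpace ℝ F]
    [CompleteSpace F] {f : F → ℝ} {n : WithTop ℕ∞} (hf : ContDiff ℝ n f) (hn : n ≠ 0) :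
    Continuous (gradient f) :=
  (InnerProductSpace.toDual ℝ F).symm.continuous.comp (hf.continuous_fderiv hn)

lemma hasDerivAt_comp_sub_smul {E : Type*} [NormedAddCommGroup E] [NormedSpace ℝ E]
    {T : E → ℝ} (hT : Differentiable ℝ T) (y w : E) (ε : ℝ) :
    HasDerivAt (fun ε : ℝ => T (y - ε • w)) (fderiv ℝ T (y - ε • w) (-w)) ε := by
  have hy : HasDerivAt (fun ε : ℝ => y - ε • w) (-w) ε := by
    simpa using ((hasDerivAt_id ε).smul_const w).const_sub y
  exact (hT _).hasFDerivAt.comp_hasDerivAt ε hy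

lemma norm_fderiv_apply_le_indicator {E : Type*} [NormedAddCommGroup E] [NormedSpace ℝ E]
    {T : E → ℝ} {R C Mv Mw : ℝ} (hR : tsupport T ⊆ closedBall 0 R)
    (hC : ∀ y, ‖fderiv ℝ T y‖ ≤ C) {x v w : E} (hv : ‖v‖ ≤ Mv) (hw : ‖w‖ ≤ Mw) {ε : ℝ}
    (hε : ‖ε‖ ≤ 1) :
    ‖fderiv ℝ T (x - v - ε • w) (-w)‖ ≤
      (closedBall 0 (R + (Mv + Mw))).indicator (fun _ => C * Mw) x := by
  by_cases hx : x ∈ closedBall 0 (R + (Mv + Mw))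
  · rw [Set.indicator_of_mem hx]
    refine ((fderiv ℝ T _).le_opNorm _).trans ?_
    rw [norm_neg]
    exact mul_le_mul (hC _) hw (norm_nonneg _) ((norm_nonneg _).trans (hC 0))
  · have hdisp : ‖v + ε • w‖ ≤ Mv + Mw := by
      refine (norm_add_le _ _).trans (add_le_add hv ?_)
      rw [norm_smul]
      nlinarith [norm_nonneg w, norm_nonneg ε]
    rw [Set.indicator_of_notMem hx, sub_sub,
      apply_sub_eq_zero_of_tsupport_subset_closedBall
        ((tsupport_fderiv_subset ℝ).trans hR) hdisp hx]
    simp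

theorem hasDerivAt_integral_mul_comp_sub_smul {E : Type*} [NormedAddCommGroup E]
    [NormedSpace ℝ E] [FiniteDimensional ℝ E] [MeasurableSpace E] [BorelSpace E]
    {μ : Measure E} [IsFiniteMeasureOnCompacts μ]
    {T : E → ℝ} (hT : ContDiff ℝ 1 T) (hTc : HasCompactSupport T)
    {f : E → ℂ} (hf : Continuous f) {v w : E → E} (hv : Continuous v) (hw : Continuous w)
    {Mv Mw : ℝ} (hvb : ∀ x, ‖v x‖ ≤ Mv) (hwb : ∀ x, ‖w x‖ ≤ Mw) :
    HasDerivAt (fun ε : ℝ => ∫ x, f x * (T (x - v x - ε • w x) : ℂ) ∂μ)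
      (∫ x, f x * (fderiv ℝ T (x - v x) (-w x) : ℂ) ∂μ) 0 := by
  obtain ⟨R, hR⟩ := hTc.isBounded.subset_closedBall 0
  have hT' : Continuous (fderiv ℝ T) := hT.continuous_fderiv one_ne_zero
  obtain ⟨C, hC⟩ := hT'.bounded_above_of_compact_support (hTc.fderiv (𝕜 := ℝ))
  have hshift : ∀ ε : ℝ, Continuous fun x => x - v x - ε • w x := fun ε =>
    (continuous_id.sub hv).sub (hw.const_smul ε)
  have hF0 : Integrable (fun x => f x * (T (x - v x - (0 : ℝ) • w x) : ℂ)) μ := by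
    simp only [zero_smul, sub_zero]
    exact (hf.mul (continuous_ofReal.comp (hT.continuous.comp (continuous_id.sub hv))))
      |>.integrable_of_hasCompactSupport
        ((hTc.comp_left ofReal_zero).comp_sub_of_norm_le hvb).mul_left
  have hbound : Integrable
      ((closedBall (0 : E) (R + (Mv + Mw))).indicator fun x => ‖f x‖ * (C * Mw)) μ :=
    ((hf.norm.mul continuous_const).continuousOn.integrableOn_compact
      (isCompact_closedBall _ _)).integrable_indicator measurableSet_closedBall
  have hderiv := hasDerivAt_integral_of_dominated_loc_of_deriv_le (μ := μ)
    (F := fun ε x => f x * (T (x - v x - ε • w x) : ℂ))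
    (F' := fun ε x => f x * (fderiv ℝ T (x - v x - ε • w x) (-w x) : ℂ))
    (ball_mem_nhds 0 one_pos)
    (.of_forall fun ε => (hf.mul (continuous_ofReal.comp
      (hT.continuous.comp (hshift ε)))).aestronglyMeasurable) hF0
    (hf.mul (continuous_ofReal.comp ((hT'.comp (hshift 0)).clm_apply hw.neg))).aestronglyMeasurable
    (.of_forall fun x ε hε => by
      rw [Set.indicator_mul_right, norm_mul, norm_real]
      exact mul_le_mul_of_nonneg_left (norm_fderiv_apply_le_indicator hR hC (hvb x) (hwb x)
        (mem_ball_zero_iff.1 hε).le) (norm_nonneg _))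
    hbound
    (.of_forall fun x ε _ => ((hasDerivAt_comp_sub_smul (hT.differentiable one_ne_zero)
      (x - v x) (w x) ε).ofReal_comp.const_mul (f x)))
  simpa only [zero_smul, sub_zero] using hderiv.2

lemma hasGradientAt_psil (l x : E2) :
    HasGradientAt (psil l) (-(2 * Real.sin ⟪l, x⟫) • l) x := by
  have h : HasFDerivAt (psil l) _ x := ((Real.hasDerivAt_cos ⟪l, x⟫).comp_hasFDerivAt x
    (innerSL ℝ l).hasFDerivAt).const_mul (2 : ℝ)
  rw [hasGradientAt_iff_hasFDerivAt]
  refine h.congr_fderiv ?_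
  ext y
  simp
  ring

lemma gradient_psil (l x : E2) : gradient (psil l) x = -(2 * Real.sin ⟪l, x⟫) • l :=
  (hasGradientAt_psil l x).gradient

lemma norm_gradient_psil_le (l x : E2) : ‖gradient (psil l) x‖ ≤ 2 * ‖l‖ := by
  rw [gradient_psil, norm_smul, norm_neg, norm_mul, Real.norm_two]
  gcongr
  exact mul_le_of_le_one_right zero_le_two (Real.abs_sin_le_one _)

lemma continuous_gradient_psil (l : E2) : Continuous (gradient (psil l)) := by
  simp_rw [funext (gradient_psil l)]
  fun_prop

lemma fderiv_apply_eq_sum_pderiv2 (T : E2 → ℝ) (y m : E2) :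
    fderiv ℝ T y m = ∑ q, m q * pderiv2 q T y := by
  conv_lhs => rw [← (EuclideanSpace.basisFun (Fin 2) ℝ).sum_repr m]
  simp [pderiv2, EuclideanSpace.basisFun_apply]

lemma exp_neg_I_mul_mul_two_sin (a b : ℂ) :
    cexp (-(I * a)) * (2 * sin b) = I * (cexp (-(I * (a + b))) - cexp (-(I * (a - b)))) := by
  simp only [sin, mul_add, mul_sub, neg_add, neg_sub, exp_add, exp_sub, exp_neg]
  field_simp
  rw [mul_sub, ← exp_add, add_neg_cancel, exp_zero]
  ring

lemma exp_mul_fderiv_neg_gradient_psil (T φ : E2 → ℝ) (k l x : E2) :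
    cexp (-(I * ⟪x, k⟫)) * (fderiv ℝ T (x - gradient φ x) (-gradient (psil l) x) : ℂ) =
      ∑ q, I * (l q : ℂ) * (cexp (-(I * ⟪x, k + l⟫)) * Aq T φ q x
        - cexp (-(I * ⟪x, k - l⟫)) * Aq T φ q x) := by
  rw [gradient_psil, neg_smul, neg_neg, map_smul, fderiv_apply_eq_sum_pderiv2, inner_add_right,
    inner_sub_right, real_inner_comm x l, smul_eq_mul]
  push_cast
  rw [← mul_assoc, exp_neg_I_mul_mul_two_sin, Finset.mul_sum]
  refine Finset.sum_congr rfl fun q _ => ?_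
  simp only [Aq]
  ring

lemma smul_integral_sum_eq_sum_ftR (A : Fin 2 → E2 → ℝ)
    (hA : ∀ q m, Integrable fun x => cexp (-(I * ⟪x, m⟫)) * (A q x : ℂ)) (k l : E2) :
    (2 * Real.pi)⁻¹ • ∫ x, ∑ q, I * (l q : ℂ) * (cexp (-(I * ⟪x, k + l⟫)) * A q x
        - cexp (-(I * ⟪x, k - l⟫)) * A q x) =
      ∑ q, I * (l q : ℂ) * (ftR (A q) (k + l) - ftR (A q) (k - l)) := by
  rw [integral_finsetSum, Finset.smul_sum]
  · refine Finset.sum_congr rfl fun q _ => ?_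
    rw [integral_const_mul, integral_sub (hA q _) (hA q _), ftR, ftR, ft, ft]
    simp only [Complex.real_smul]
    ring
  · exact fun q _ => ((hA q _).sub (hA q _)).const_mul _

lemma integrable_exp_mul_Aq {T φ : E2 → ℝ} (hT : ContDiff ℝ 1 T) (hTc : HasCompactSupport T)
    (hφ : Continuous (gradient φ)) {M : ℝ} (hbφ : ∀ x, ‖gradient φ x‖ ≤ M) (q : Fin 2) (m : E2) :
    Integrable fun x => cexp (-(I * ⟪x, m⟫)) * (Aq T φ q x : ℂ) := by
  have hc : Continuous (Aq T φ q) :=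
    ((hT.continuous_fderiv one_ne_zero).clm_apply continuous_const).comp (continuous_id.sub hφ)
  have hs : HasCompactSupport (Aq T φ q) :=
    (hTc.fderiv_apply (𝕜 := ℝ) _).comp_sub_of_norm_le hbφ
  exact (by fun_prop : Continuous fun x => cexp (-(I * ⟪x, m⟫)) * (Aq T φ q x : ℂ))
    |>.integrable_of_hasCompactSupport (hs.comp_left ofReal_zero).mul_left

/-- Derivative of the Fourier coefficient of the anti-lensed field along the cosine mode at
frequency `l`: it equals `∑_q i l_q (Â^q(k+l) - Â^q(k-l))`. -/
theorem stmt5 (T : E2 → ℝ) (hT : ContDiff ℝ 1 T) (hTc : HasCompactSupport T)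
    (φ : E2 → ℝ) (hφ : ContDiff ℝ 2 φ)
    (Mφ : ℝ) (hbφ : ∀ x, ‖gradient φ x‖ ≤ Mφ)
    (k l : E2) :
    HasDerivAt
      (fun ε : ℝ => (2 * Real.pi)⁻¹ • ∫ x : E2,
        Complex.exp (-(Complex.I * (⟪x, k⟫ : ℂ))) *
          ((T (x - gradient φ x - ε • gradient (psil l) x) : ℝ) : ℂ))
      (∑ q : Fin 2, Complex.I * ((l q : ℝ) : ℂ) *
        (ftR (Aq T φ q) (k + l) - ftR (Aq T φ q) (k - l)))
      0 := by
  have hgrad : Continuous (gradient φ) := hφ.continuous_gradient two_ne_zero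
  have hderiv := (hasDerivAt_integral_mul_comp_sub_smul (μ := volume) hT hTc
    (f := fun x => cexp (-(I * ⟪x, k⟫))) (by fun_prop) hgrad (continuous_gradient_psil l) hbφ
    (norm_gradient_psil_le l)).const_smul (2 * Real.pi)⁻¹
  simp only [exp_mul_fderiv_neg_gradient_psil] at hderiv
  rwa [smul_integral_sum_eq_sum_ftR _ (integrable_exp_mul_Aq hT hTc hgrad hbφ)] at hderiv
end
end
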